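/- arXiv:2109.14140 — 3 statements merged into one kernel-verified Lean document; each statement's English description precedes it below -/
import Mathlib

section
/- Let v, h, b be positive integers with b < binom(v,3) and suppose there exists an NWBTS(v;b). Then (i) there exists an NWBTS(v; b₁) with b₁ = h·binom(v,3) + b, and (ii) there exists an NWBTS(v; b₂) with b₂ = binom(v,3) − b. -/
namespace DataPlacement

open Finset

variable {α : Type*} [DecidableEq α]

/-- Number of blocks of the family `F` (with multiplicity) containing `T`. -/
def lamF (F : Multiset (Finset α)) (T : Finset α) : ℕ :=
  Multiset.card (F.filter fun B => T ⊆ B)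

/-- Triple system with `b` blocks on a point set `X` of size `v`. -/
def IsTSOn (X : Finset α) (v b : ℕ) (F : Multiset (Finset α)) : Prop :=
  X.card = v ∧ Multiset.card F = b ∧ ∀ B ∈ F, B.card = 3 ∧ B ⊆ X

/-- `(l, e)` is the pair associated with `(v, b)`:
`3b = l·v(v−1)/2 + e` with `−v/2 < e < v/2`. -/
def AssocPair (v b l : ℕ) (e : ℤ) : Prop :=
  6 * (b : ℤ) = (l : ℤ) * v * ((v : ℤ) - 1) + 2 * e ∧
    -(v : ℤ) < 2 * e ∧ 2 * e < (v : ℤ)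

/-- Condition (C1). -/
def CondC1 (v b : ℕ) : Prop :=
  v % 3 = 2 ∧ ∃ l : ℕ, 0 < l ∧
    ((v % 6 = 5 ∧ (l % 3 = 1 ∨ l % 3 = 2)) ∨
     (v % 6 = 2 ∧ (l % 6 = 2 ∨ l % 6 = 4))) ∧
    (b = l * v * (v - 1) / 6 ∨ b = (l * v * (v - 1) + 5) / 6)

/-- Condition (C2). -/
def CondC2 (v b : ℕ) : Prop :=
  v % 2 = 0 ∧ ∃ l : ℕ, 0 < l ∧ l % 2 = 1 ∧
    (l : ℤ) * v * ((v : ℤ) - 1) - v < 6 * (b : ℤ) ∧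
    6 * (b : ℤ) < (l : ℤ) * v * ((v : ℤ) - 1) + v

/-- Pairs of points of `X` whose block count equals `l + i`. -/
def Dlev (X : Finset α) (F : Multiset (Finset α)) (l : ℕ) (i : ℤ) :
    Finset (Finset α) :=
  (X.powersetCard 2).filter fun p => (lamF F p : ℤ) = (l : ℤ) + i

/-- Every pair of points of `X` lies in `l−1`, `l`, or `l+1` blocks. -/
def PairRangeOn (X : Finset α) (F : Multiset (Finset α)) (l : ℕ) : Prop :=
  ∀ p ∈ X.powersetCard 2,
    (l : ℤ) - 1 ≤ (lamF F p : ℤ) ∧ (lamF F p : ℤ) ≤ (l : ℤ) + 1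

def IsTriangle (D : Finset (Finset α)) : Prop :=
  ∃ x y z : α, x ≠ y ∧ x ≠ z ∧ y ≠ z ∧
    D = {({x, y} : Finset α), {y, z}, {x, z}}

def IsFourCycle (D : Finset (Finset α)) : Prop :=
  ∃ x y z w : α, x ≠ y ∧ x ≠ z ∧ x ≠ w ∧ y ≠ z ∧ y ≠ w ∧ z ≠ w ∧
    D = {({x, y} : Finset α), {y, z}, {z, w}, {x, w}}

/-- `D` is a perfect matching on the point set `X`. -/
def IsPerfectMatchingOn (X : Finset α) (D : Finset (Finset α)) : Prop :=
  (∀ p ∈ D, p.card = 2 ∧ p ⊆ X) ∧ ∀ x ∈ X, ∃! p, p ∈ D ∧ x ∈ p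

/-- Defect-graph shape required for nearly 2-balance under (C1). -/
def C1ShapeOn (X : Finset α) (F : Multiset (Finset α)) (l : ℕ) (e : ℤ) : Prop :=
  (e = 1 ∧ IsTriangle (Dlev X F l 1 ∪ Dlev X F l (-1)) ∧
     (Dlev X F l 1).card = 2 ∧ (Dlev X F l (-1)).card = 1) ∨
  (e = -1 ∧ IsTriangle (Dlev X F l 1 ∪ Dlev X F l (-1)) ∧
     (Dlev X F l 1).card = 1 ∧ (Dlev X F l (-1)).card = 2) ∨
  (e = 2 ∧ IsFourCycle (Dlev X F l 1 ∪ Dlev X F l (-1)) ∧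
     (Dlev X F l 1).card = 3 ∧ (Dlev X F l (-1)).card = 1) ∨
  (e = -2 ∧ IsFourCycle (Dlev X F l 1 ∪ Dlev X F l (-1)) ∧
     (Dlev X F l 1).card = 1 ∧ (Dlev X F l (-1)).card = 3)

/-- Defect-graph shape required for nearly 2-balance under (C2)
(here `v = X.card`). -/
def C2ShapeOn (X : Finset α) (v : ℕ) (F : Multiset (Finset α)) (l : ℕ) (e : ℤ) : Prop :=
  (((v : ℤ) - 2 * e) % 4 = 0 ∧
    IsPerfectMatchingOn X (Dlev X F l 1 ∪ Dlev X F l (-1)) ∧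
    4 * ((Dlev X F l 1).card : ℤ) = (v : ℤ) + 2 * e ∧
    4 * ((Dlev X F l (-1)).card : ℤ) = (v : ℤ) - 2 * e) ∨
  (((v : ℤ) - 2 * e) % 4 ≠ 0 ∧
    ∃ (c a₂ a₃ a₄ : α) (star : Finset (Finset α)),
      c ∈ X ∧ a₂ ∈ X ∧ a₃ ∈ X ∧ a₄ ∈ X ∧
      c ≠ a₂ ∧ c ≠ a₃ ∧ c ≠ a₄ ∧ a₂ ≠ a₃ ∧ a₂ ≠ a₄ ∧ a₃ ≠ a₄ ∧
      star = {({c, a₂} : Finset α), {c, a₃}, {c, a₄}} ∧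
      star ⊆ Dlev X F l 1 ∪ Dlev X F l (-1) ∧
      IsPerfectMatchingOn (X \ {c, a₂, a₃, a₄})
        ((Dlev X F l 1 ∪ Dlev X F l (-1)) \ star) ∧
      (((star ∩ Dlev X F l 1).card = 2 ∧ (star ∩ Dlev X F l (-1)).card = 1 ∧
          4 * (((Dlev X F l 1) \ star).card : ℤ) = (v : ℤ) - 6 + 2 * e ∧
          4 * (((Dlev X F l (-1)) \ star).card : ℤ) = (v : ℤ) - 2 - 2 * e) ∨
        ((star ∩ Dlev X F l 1).card = 1 ∧ (star ∩ Dlev X F l (-1)).card = 2 ∧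
          4 * (((Dlev X F l 1) \ star).card : ℤ) = (v : ℤ) - 2 + 2 * e ∧
          4 * (((Dlev X F l (-1)) \ star).card : ℤ) = (v : ℤ) - 6 - 2 * e)))

/-- `F` is 3-balanced on `X`: the multiplicities of any two triples of `X`
differ by at most one. -/
def ThreeBalancedOn (X : Finset α) (F : Multiset (Finset α)) : Prop :=
  ∀ T₁ ∈ X.powersetCard 3, ∀ T₂ ∈ X.powersetCard 3, F.count T₁ ≤ F.count T₂ + 1

/-- Nearly well-balanced triple system NWBTS(v;b) on the point set `X`. -/
def IsNWBTSOn (X : Finset α) (v b : ℕ) (F : Multiset (Finset α)) : Prop :=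
  IsTSOn X v b F ∧ ThreeBalancedOn X F ∧
  ∃ (l : ℕ) (e : ℤ), 0 < l ∧ AssocPair v b l e ∧ PairRangeOn X F l ∧
    ((CondC1 v b ∧ C1ShapeOn X F l e) ∨ (CondC2 v b ∧ C2ShapeOn X v F l e))

/-- `B` is an S_mu(2,3,·) design on the point set `X`. -/
def IsSDesignOn (X : Finset α) (mu : ℕ) (B : Multiset (Finset α)) : Prop :=
  (∀ A ∈ B, A.card = 3 ∧ A ⊆ X) ∧ ∀ p ∈ X.powersetCard 2, lamF B p = mu

/-- `B` is a GDD_mu(2,3,·) of type `1^{·}u^1` on `X` with long group `U`. -/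
def IsGDD1u (X : Finset α) (mu u : ℕ) (U : Finset α) (B : Multiset (Finset α)) : Prop :=
  U ⊆ X ∧ U.card = u ∧
  (∀ A ∈ B, A.card = 3 ∧ A ⊆ X ∧ (A ∩ U).card ≤ 1) ∧
  ∀ p ∈ X.powersetCard 2, ¬ p ⊆ U → lamF B p = mu

/-- `B` is a GDD_mu(2,3,·) with group family `G`. -/
def IsGDDgroups (mu : ℕ) {n : ℕ} (G : Fin n → Finset α) (B : Multiset (Finset α)) : Prop :=
  (∀ A ∈ B, A.card = 3 ∧ A ⊆ Finset.univ.biUnion G ∧ ∀ i, (A ∩ G i).card ≤ 1) ∧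
  ∀ x y : α, x ≠ y → (∃ i j, i ≠ j ∧ x ∈ G i ∧ y ∈ G j) → lamF B {x, y} = mu

/-- Nearly group divisible design NGDD(2,3,·) of type `2^{(m,n)}u^1` on `X`. -/
def IsNGDD (X : Finset α) (m n u : ℕ) (G : Fin (m + n) → Finset α) (U : Finset α)
    (B : Multiset (Finset α)) : Prop :=
  (∀ i, (G i).card = 2 ∧ G i ⊆ X) ∧ U.card = u ∧ U ⊆ X ∧
  (∀ i j, i ≠ j → Disjoint (G i) (G j)) ∧ (∀ i, Disjoint (G i) U) ∧
  U ∪ Finset.univ.biUnion G = X ∧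
  (∀ A ∈ B, A.card = 3 ∧ A ⊆ X) ∧
  (∀ i : Fin (m + n), (i : ℕ) < m → lamF B (G i) = 2) ∧
  (∀ i : Fin (m + n), m ≤ (i : ℕ) → lamF B (G i) = 0) ∧
  (∀ p ∈ U.powersetCard 2, lamF B p = 0) ∧
  (∀ p ∈ X.powersetCard 2, (∀ i, ¬ p ⊆ G i) → ¬ p ⊆ U → lamF B p = 1)

/-- Candelabra system CS(g^n : s) on `X` with stem `S` and groups `G`. -/
def IsCS (X : Finset α) (g n s : ℕ) (S : Finset α) (G : Fin n → Finset α)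
    (A : Multiset (Finset α)) : Prop :=
  S.card = s ∧ S ⊆ X ∧ (∀ i, (G i).card = g ∧ G i ⊆ X) ∧
  (∀ i j, i ≠ j → Disjoint (G i) (G j)) ∧ (∀ i, Disjoint (G i) S) ∧
  S ∪ Finset.univ.biUnion G = X ∧
  (∀ B ∈ A, B.card = 3 ∧ B ⊆ X) ∧
  (∀ T ∈ X.powersetCard 3, (∀ i, ¬ T ⊆ S ∪ G i) → lamF A T = 1) ∧
  (∀ T ∈ X.powersetCard 3, (∃ i, T ⊆ S ∪ G i) → lamF A T = 0)

/-- Partitionable candelabra system PCS(g^n : s). -/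
def IsPCS (X : Finset α) (g n s : ℕ) (S : Finset α) (G : Fin n → Finset α)
    (A : Multiset (Finset α)) : Prop :=
  IsCS X g n s S G A ∧
  ∃ (Ax : α → Multiset (Finset α)) (Ai : Fin (s - 2) → Multiset (Finset α)),
    A = (∑ p ∈ X \ S, Ax p) + ∑ i, Ai i ∧
    (∀ i : Fin n, ∀ p ∈ G i, IsGDD1u X 1 (g + s) (G i ∪ S) (Ax p)) ∧
    (∀ j, IsGDDgroups 1 G (Ai j))

/-- g-PCS_2((2ag)^n : s). -/
def IsGPCS2 (X : Finset α) (a g n s : ℕ) (S : Finset α) (G : Fin n → Finset α)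
    (A : Multiset (Finset α)) : Prop :=
  IsCS X (2 * a * g) n s S G A ∧
  ∃ (P : Fin (g * n) → Multiset (Finset α)) (grp : Fin (g * n) → Fin n),
    (∑ i, P i) ≤ A ∧
    (∀ j : Fin n, (Finset.univ.filter fun i => grp i = j).card = g) ∧
    (∀ i, IsGDD1u X 2 (2 * a * g + s) (G (grp i) ∪ S) (P i))

/-- g-PCS_2^r((2ag)^n : s). -/
def IsGPCS2r (X : Finset α) (a g n s r : ℕ) (S : Finset α) (G : Fin n → Finset α)
    (A : Multiset (Finset α)) : Prop :=
  IsCS X (2 * a * g) n s S G A ∧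
  ∃ (P : Fin (g * n) → Multiset (Finset α)) (grp : Fin (g * n) → Fin n),
    (∑ i, P i) ≤ A ∧
    (∀ j : Fin n, (Finset.univ.filter fun i => grp i = j).card = g) ∧
    (∀ i, IsGDD1u X 2 (2 * a * g + s) (G (grp i) ∪ S) (P i)) ∧
    ∃ (i : Fin (g * n)) (N : Multiset (Finset α))
      (Gs : Fin (r + (a * g * (n - 1) - r)) → Finset α),
      N ≤ P i ∧ IsNGDD X r (a * g * (n - 1) - r) (2 * a * g + s) Gs (G (grp i) ∪ S) N

/-- GDD(3,3,·) of type `g^k` on `X` with groups `H`. -/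
def IsGDD3On (X : Finset α) (g : ℕ) {k : ℕ} (H : Fin k → Finset α)
    (A : Multiset (Finset α)) : Prop :=
  (∀ i, (H i).card = g ∧ H i ⊆ X) ∧ (∀ i j, i ≠ j → Disjoint (H i) (H j)) ∧
  Finset.univ.biUnion H = X ∧
  (∀ B ∈ A, B.card = 3 ∧ B ⊆ X ∧ ∀ i, (B ∩ H i).card ≤ 1) ∧
  (∀ T ∈ X.powersetCard 3, (∀ i, (T ∩ H i).card ≤ 1) → lamF A T = 1)

/-- `B` is a GDD_mu(2,3,·) on the points not in the omitted group `H o`,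
with group set `{H i : i ≠ o}`. -/
def IsGDDOmit (mu : ℕ) {k : ℕ} (H : Fin k → Finset α) (o : Fin k)
    (B : Multiset (Finset α)) : Prop :=
  (∀ A ∈ B, A.card = 3 ∧ Disjoint A (H o) ∧ ∀ i, (A ∩ H i).card ≤ 1) ∧
  ∀ x y : α, x ≠ y →
    (∃ i j, i ≠ j ∧ i ≠ o ∧ j ≠ o ∧ x ∈ H i ∧ y ∈ H j) → lamF B {x, y} = mu

/-- PGDD_2((2g)^{n+1}). -/
def IsPGDD2 (g n : ℕ) (H : Fin (n + 1) → Finset (Fin (2 * g * (n + 1))))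
    (A : Multiset (Finset (Fin (2 * g * (n + 1))))) : Prop :=
  IsGDD3On Finset.univ (2 * g) H A ∧
  ∃ (i0 : Fin (n + 1))
    (P : Fin (g * n + 2 * g) → Multiset (Finset (Fin (2 * g * (n + 1)))))
    (f : Fin (g * n + 2 * g) → Fin (n + 1)),
    A = ∑ i, P i ∧
    (∀ j, j ≠ i0 → (Finset.univ.filter fun i => f i = j).card = g) ∧
    (∀ i, f i ≠ i0 → IsGDDOmit 2 H (f i) (P i)) ∧
    (∀ i, f i = i0 → IsGDDOmit 1 H i0 (P i))

/-- 1-FG(3,(K1,KT),n) of type 1^n. -/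
def Is1FG (n : ℕ) (K1 KT : Set ℕ) (A1 AT : Multiset (Finset (Fin n))) : Prop :=
  (∀ B ∈ A1, B.card ∈ K1) ∧ (∀ B ∈ AT, B.card ∈ KT) ∧
  (∀ p ∈ (Finset.univ : Finset (Fin n)).powersetCard 2, lamF A1 p = 1) ∧
  (∀ T ∈ (Finset.univ : Finset (Fin n)).powersetCard 3, lamF (A1 + AT) T = 1)

/-- PICS_2^r((2g)^3 : 0). -/
def IsPICS2 (g r : ℕ) (G : Fin 3 → Finset (Fin (6 * g)))
    (A : Multiset (Finset (Fin (6 * g)))) : Prop :=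
  IsCS Finset.univ (2 * g) 3 0 (∅ : Finset (Fin (6 * g))) G A ∧
  ∃ P : Fin (4 * g - 2) → Multiset (Finset (Fin (6 * g))),
    A = ∑ i, P i ∧
    (∀ i : Fin (4 * g - 2), (i : ℕ) < 2 * g → IsSDesignOn Finset.univ 2 (P i)) ∧
    (∃ i : Fin (4 * g - 2), (i : ℕ) < 2 * g ∧
      ∃ (N : Multiset (Finset (Fin (6 * g))))
        (Gs : Fin (r + (3 * g - r)) → Finset (Fin (6 * g))),
        N ≤ P i ∧ IsNGDD Finset.univ r (3 * g - r) 0 Gs ∅ N) ∧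
    (∀ i : Fin (4 * g - 2), 2 * g ≤ (i : ℕ) → IsGDDgroups 1 G (P i))

/-- Number of ordered pairs of blocks of `F` whose intersection has exactly
`j` points. -/
def interCount (F : Multiset (Finset α)) (j : ℕ) : ℕ :=
  Multiset.card
    ((F.bind fun A => F.map fun B => (A, B)).filter fun p => (p.1 ∩ p.2).card = j)

/-- The polynomial `P(F, x) = Σ_{j=0}^{3} v_j x^j`. -/
noncomputable def Pval (F : Multiset (Finset α)) (x : ℝ) : ℝ :=
  ∑ j ∈ Finset.range 4, (interCount F j : ℝ) * x ^ j

/-- Optimal data placement for triple replication. -/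
def IsOptimalDP (v b : ℕ) (F : Multiset (Finset (Fin v))) : Prop :=
  IsTSOn Finset.univ v b F ∧
  ∀ F' : Multiset (Finset (Fin v)), IsTSOn Finset.univ v b F' →
    ∀ x : ℝ, 1 ≤ x → Pval F x ≤ Pval F' x

lemma lamF_add (F G : Multiset (Finset α)) (T : Finset α) :
    lamF (F + G) T = lamF F T + lamF G T := by
  simp [lamF, Multiset.filter_add]

lemma lamF_nsmul (F : Multiset (Finset α)) (T : Finset α) (n : ℕ) :
    lamF (n • F) T = n * lamF F T := by
  induction n with
  | zero => simp [lamF]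
  | succ k ih => rw [succ_nsmul, lamF_add, ih]; ring

lemma lamF_le_of_le {F G : Multiset (Finset α)} (h : F ≤ G) (T : Finset α) :
    lamF F T ≤ lamF G T :=
  Multiset.card_le_card (Multiset.filter_le_filter _ h)

lemma lamF_sub {F G : Multiset (Finset α)} (h : G ≤ F) (T : Finset α) :
    lamF (F - G) T = lamF F T - lamF G T := by
  unfold lamF
  rw [Multiset.filter_sub, Multiset.card_sub (Multiset.filter_le_filter _ h)]

lemma int_eq_of_mul_bounds {d V : ℤ} (hV : 0 < V) (h1 : -V < d * V) (h2 : d * V < V) :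
    d = 0 := by
  rcases lt_trichotomy d 0 with h | h | h
  · exfalso; have hd : d ≤ -1 := by omega
    nlinarith
  · exact h
  · exfalso; have hd : 1 ≤ d := h
    nlinarith

lemma assoc_l_unique {v b l l' : ℕ} {e : ℤ} (hv4 : 4 ≤ v)
    (h1 : 6 * (b : ℤ) = (l : ℤ) * v * ((v : ℤ) - 1) + 2 * e)
    (he1 : -(v : ℤ) < 2 * e) (he2 : 2 * e < v)
    (hlow : (l' : ℤ) * v * ((v : ℤ) - 1) - v ≤ 6 * (b : ℤ))
    (hhigh : 6 * (b : ℤ) ≤ (l' : ℤ) * v * ((v : ℤ) - 1) + v) : l = l' := by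
  have h4 : (4 : ℤ) ≤ (v : ℤ) := by exact_mod_cast hv4
  have hVpos : (0 : ℤ) < (v : ℤ) * ((v : ℤ) - 1) := by nlinarith
  have hV2 : 2 * (v : ℤ) < (v : ℤ) * ((v : ℤ) - 1) := by nlinarith
  have hkey : ((l : ℤ) - l') * ((v : ℤ) * ((v : ℤ) - 1))
      = 6 * (b : ℤ) - 2 * e - (l' : ℤ) * v * ((v : ℤ) - 1) := by
    linear_combination -h1
  have hd := int_eq_of_mul_bounds (d := (l : ℤ) - l') hVpos
    (by rw [hkey]; linarith) (by rw [hkey]; linarith)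
  omega

lemma l_le_v_sub_two {v b l C : ℕ} {e : ℤ} (hv4 : 4 ≤ v)
    (h1 : 6 * (b : ℤ) = (l : ℤ) * v * ((v : ℤ) - 1) + 2 * e)
    (he1 : -(v : ℤ) < 2 * e)
    (hK6 : 6 * (C : ℤ) = (v : ℤ) * ((v : ℤ) - 1) * ((v : ℤ) - 2))
    (hbC : b < C) : (l : ℤ) ≤ (v : ℤ) - 2 := by
  have h4 : (4 : ℤ) ≤ (v : ℤ) := by exact_mod_cast hv4
  have hbC' : (b : ℤ) + 1 ≤ C := by exact_mod_cast hbC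
  by_contra hcon
  push_neg at hcon
  have hge : (v : ℤ) - 1 ≤ (l : ℤ) := by omega
  have hmul : ((v : ℤ) - 1) * ((v : ℤ) * ((v : ℤ) - 1)) ≤ (l : ℤ) * ((v : ℤ) * ((v : ℤ) - 1)) := by
    nlinarith
  nlinarith

lemma choose_three_six (v : ℕ) : 6 * v.choose 3 = v * (v - 1) * (v - 2) := by
  have h := Nat.descFactorial_eq_factorial_mul_choose v 3
  have h2 : v.descFactorial 3 = (v - 2) * ((v - 1) * (v * 1)) := by
    simp [Nat.descFactorial_succ, Nat.descFactorial_zero]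
  rw [show Nat.factorial 3 = 6 from rfl] at h
  calc 6 * v.choose 3 = v.descFactorial 3 := h.symm
  _ = v * (v-1) * (v-2) := by rw [h2]; ring

lemma lamF_univ_powersetCard (v : ℕ) (p : Finset (Fin v)) (hp : p.card = 2) :
    lamF ((univ : Finset (Fin v)).powersetCard 3).val p = v - 2 := by
  have heq : lamF ((univ : Finset (Fin v)).powersetCard 3).val p
      = (((univ : Finset (Fin v)).powersetCard 3).filter fun B => p ⊆ B).card := rfl
  rw [heq]
  have himg : ((univ : Finset (Fin v)).powersetCard 3).filter (fun B => p ⊆ B)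
      = (univ \ p).image (fun x => insert x p) := by
    ext B
    simp only [Finset.mem_filter, Finset.mem_powersetCard_univ, Finset.mem_image,
      Finset.mem_sdiff, Finset.mem_univ, true_and]
    constructor
    · rintro ⟨hB3, hpB⟩
      have hcard : (B \ p).card = 1 := by rw [Finset.card_sdiff_of_subset hpB, hB3, hp]
      obtain ⟨x, hx⟩ := Finset.card_eq_one.mp hcard
      have hx' := Finset.mem_sdiff.mp (hx ▸ Finset.mem_singleton_self x)
      exact ⟨x, hx'.2, Finset.eq_of_subset_of_card_le (Finset.insert_subset hx'.1 hpB)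
        (by rw [Finset.card_insert_of_notMem hx'.2, hp, hB3])⟩
    · rintro ⟨x, hxp, rfl⟩
      exact ⟨by rw [Finset.card_insert_of_notMem hxp, hp], Finset.subset_insert x p⟩
  rw [himg, Finset.card_image_of_injOn, Finset.card_sdiff_of_subset (Finset.subset_univ p),
    Finset.card_univ, Fintype.card_fin, hp]
  intro x hx y hy hxy
  have hxy' : insert x p = insert y p := hxy
  have hxmem : x ∈ insert y p := hxy' ▸ Finset.mem_insert_self x p
  rcases Finset.mem_insert.mp hxmem with h | h
  · exact h
  · exact absurd h (Finset.mem_sdiff.mp hx).2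


/-- complementation and repetition of NWBTSs. -/
theorem stmt_3 (v h b : ℕ) (hv : 0 < v) (hh : 0 < h) (hb : 0 < b)
    (hlt : b < v.choose 3)
    (hex : ∃ F : Multiset (Finset (Fin v)), IsNWBTSOn Finset.univ v b F) :
    (∃ F₁ : Multiset (Finset (Fin v)),
        IsNWBTSOn Finset.univ v (h * v.choose 3 + b) F₁) ∧
    (∃ F₂ : Multiset (Finset (Fin v)),
        IsNWBTSOn Finset.univ v (v.choose 3 - b) F₂) := by
  classical
  obtain ⟨F, ⟨hXcard, hFcard, hFblocks⟩, hbal, l, e, hlpos, hassoc, hrange, hcond⟩ := hex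
  set K : Multiset (Finset (Fin v)) := ((univ : Finset (Fin v)).powersetCard 3).val with hKdef
  have hKcard : Multiset.card K = v.choose 3 := by
    show ((univ : Finset (Fin v)).powersetCard 3).card = v.choose 3
    rw [Finset.card_powersetCard, Finset.card_univ, Fintype.card_fin]
  have hKmem : ∀ B : Finset (Fin v), B ∈ K ↔ B.card = 3 := by
    intro B
    show B ∈ (univ : Finset (Fin v)).powersetCard 3 ↔ _
    simp [Finset.mem_powersetCard_univ]
  have hC2v : 2 ≤ v.choose 3 := by omega
  have hv4 : 4 ≤ v := by
    by_contra hvc; push_neg at hvc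
    interval_cases v <;> simp_all [Nat.choose]
  have hK6 : 6 * v.choose 3 = v * (v - 1) * (v - 2) := choose_three_six v
  have hcast1 : ((v - 1 : ℕ) : ℤ) = (v : ℤ) - 1 := by omega
  have hcast2 : ((v - 2 : ℕ) : ℤ) = (v : ℤ) - 2 := by omega
  have hK6' : (6 : ℤ) * (v.choose 3 : ℤ) = (v : ℤ) * ((v : ℤ) - 1) * ((v : ℤ) - 2) := by
    have := congrArg (fun n : ℕ => (n : ℤ)) hK6
    push_cast at this
    rw [hcast1, hcast2] at this
    exact this
  have hlamK : ∀ p : Finset (Fin v), p.card = 2 → lamF K p = v - 2 :=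
    fun p hp => lamF_univ_powersetCard v p hp
  have hKnodup : K.Nodup := ((univ : Finset (Fin v)).powersetCard 3).nodup
  have hKcount : ∀ T : Finset (Fin v), K.count T = if T.card = 3 then 1 else 0 := by
    intro T
    by_cases h3 : T.card = 3
    · rw [if_pos h3]; exact Multiset.count_eq_one_of_mem hKnodup ((hKmem T).2 h3)
    · rw [if_neg h3]; exact Multiset.count_eq_zero_of_notMem (fun hm => h3 ((hKmem T).1 hm))
  have hsum : ∑ T' ∈ (univ : Finset (Fin v)).powersetCard 3, F.count T' = Multiset.card F := by
    rw [← Multiset.toFinset_sum_count_eq F]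
    refine (Finset.sum_subset ?_ ?_).symm
    · intro T hT
      rw [Finset.mem_powersetCard_univ]
      exact (hFblocks T (Multiset.mem_toFinset.mp hT)).1
    · intro T _ hT'
      exact Multiset.count_eq_zero_of_notMem (fun hm => hT' (Multiset.mem_toFinset.mpr hm))
  have hFK : F ≤ K := by
    rw [Multiset.le_iff_count]
    intro T
    rw [hKcount T]
    by_cases h3 : T.card = 3
    · rw [if_pos h3]
      by_contra hgt
      push_neg at hgt
      have hall : ∀ T' ∈ (univ : Finset (Fin v)).powersetCard 3, 1 ≤ F.count T' := by
        intro T' hT'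
        have := hbal T (by rwa [Finset.mem_powersetCard_univ]) T' hT'
        omega
      have hge : v.choose 3 ≤ b := by
        calc v.choose 3 = ((univ : Finset (Fin v)).powersetCard 3).card := by
              rw [Finset.card_powersetCard, Finset.card_univ, Fintype.card_fin]
        _ = ∑ _T' ∈ (univ : Finset (Fin v)).powersetCard 3, 1 := (Finset.card_eq_sum_ones _)
        _ ≤ ∑ T' ∈ (univ : Finset (Fin v)).powersetCard 3, F.count T' := Finset.sum_le_sum hall
        _ = Multiset.card F := hsum
        _ = b := hFcard
      omega
    · rw [if_neg h3]
      rw [Nat.le_zero, Multiset.count_eq_zero]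
      intro hm; exact h3 (hFblocks T hm).1
  have hlamFle : ∀ p : Finset (Fin v), p.card = 2 → lamF F p ≤ v - 2 := by
    intro p hp
    have := lamF_le_of_le hFK p
    rwa [hlamK p hp] at this
  constructor
  · -- Part (i): repetition
    obtain ⟨m, hm⟩ : ∃ m, m = h * (v - 2) := ⟨_, rfl⟩
    have hmz : ((m : ℕ) : ℤ) = (h : ℤ) * ((v : ℤ) - 2) := by
      rw [hm, Nat.cast_mul, hcast2]
    have hlam1 : ∀ p : Finset (Fin v), p.card = 2 →
        lamF (h • K + F) p = m + lamF F p := by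
      intro p hp
      rw [lamF_add, lamF_nsmul, hlamK p hp, hm]
    have hD : ∀ i : ℤ, Dlev univ (h • K + F) (l + m) i = Dlev univ F l i := by
      intro i
      unfold Dlev
      refine Finset.filter_congr ?_
      intro p hp
      rw [Finset.mem_powersetCard_univ] at hp
      rw [hlam1 p hp]
      omega
    refine ⟨h • K + F, ⟨hXcard, ?_, ?_⟩, ?_, l + m, e, by omega, ?_, ?_, ?_⟩
    · rw [Multiset.card_add, Multiset.card_nsmul, hKcard, hFcard]
    · intro B hB
      rcases Multiset.mem_add.mp hB with hB | hB
      · exact ⟨(hKmem B).1 (Multiset.mem_of_mem_nsmul hB), Finset.subset_univ B⟩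
      · exact hFblocks B hB
    · -- three-balanced
      intro T₁ hT₁ T₂ hT₂
      rw [Finset.mem_powersetCard_univ] at hT₁ hT₂
      have h1 := hbal T₁ (by rwa [Finset.mem_powersetCard_univ]) T₂
        (by rwa [Finset.mem_powersetCard_univ])
      rw [Multiset.count_add, Multiset.count_add, Multiset.count_nsmul,
        Multiset.count_nsmul, hKcount, hKcount, if_pos hT₁, if_pos hT₂]
      omega
    · -- AssocPair
      refine ⟨?_, hassoc.2.1, hassoc.2.2⟩
      push_cast
      rw [hmz]
      linear_combination hassoc.1 + (h : ℤ) * hK6'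
    · -- PairRange
      intro p hp
      have hp2 : p.card = 2 := by rwa [Finset.mem_powersetCard_univ] at hp
      have hr := hrange p hp
      rw [hlam1 p hp2]
      constructor <;> push_cast <;> omega
    · rcases hcond with ⟨hc1, hshape⟩ | ⟨hc2, hshape⟩
      · left
        obtain ⟨hv3, l'', hl''pos, hcong, hbdiv⟩ := hc1
        have hm3 : m % 3 = 0 := by
          have h1 : (v - 2) % 3 = 0 := by omega
          rw [hm, Nat.mul_mod, h1]; simp
        refine ⟨⟨hv3, l'' + m, by omega, ?_, ?_⟩, ?_⟩
        · rcases hcong with ⟨h6, hl3⟩ | ⟨h6, hl6⟩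
          · left; exact ⟨h6, by omega⟩
          · right
            have hm6 : m % 6 = 0 := by
              have h1 : (v - 2) % 6 = 0 := by omega
              rw [hm, Nat.mul_mod, h1]; simp
            exact ⟨h6, by omega⟩
        · have hexp : (l'' + m) * v * (v - 1) = l'' * v * (v - 1) + 6 * (h * v.choose 3) := by
            have h1 : m * v * (v - 1) = h * (6 * v.choose 3) := by
              rw [hm, hK6]; ring
            calc (l'' + m) * v * (v - 1) = l'' * v * (v - 1) + m * v * (v - 1) := by ring
            _ = _ := by rw [h1]; ring
          rw [hexp]
          obtain ⟨M, hM⟩ : ∃ M, M = l'' * v * (v - 1) := ⟨_, rfl⟩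
          obtain ⟨t, ht⟩ : ∃ t, t = h * v.choose 3 := ⟨_, rfl⟩
          rw [← hM, ← ht]
          rw [← hM] at hbdiv
          omega
        · have hsh := hshape
          unfold C1ShapeOn at hsh ⊢
          rw [hD 1, hD (-1)]
          exact hsh
      · right
        obtain ⟨hv2, l'', hl''pos, hl''odd, hlow, hhigh⟩ := hc2
        have hm2 : m % 2 = 0 := by
          have h1 : (v - 2) % 2 = 0 := by omega
          rw [hm, Nat.mul_mod, h1]; simp
        have hexpZ : ((l'' + m : ℕ) : ℤ) * v * ((v : ℤ) - 1)
            = (l'' : ℤ) * v * ((v : ℤ) - 1) + 6 * ((h * v.choose 3 : ℕ) : ℤ) := by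
          push_cast
          rw [hmz]
          linear_combination -(h : ℤ) * hK6'
        refine ⟨⟨hv2, l'' + m, by omega, by omega, ?_, ?_⟩, ?_⟩
        · rw [hexpZ]; push_cast; linarith
        · rw [hexpZ]; push_cast; linarith
        · have hsh := hshape
          unfold C2ShapeOn at hsh ⊢
          rw [hD 1, hD (-1)]
          exact hsh
  · -- Part (ii): complementation
    have hble : b ≤ v.choose 3 := le_of_lt hlt
    have hb2Z : ((v.choose 3 - b : ℕ) : ℤ) = (v.choose 3 : ℤ) - b := by omega
    have hF2card : Multiset.card (K - F) = v.choose 3 - b := by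
      rw [Multiset.card_sub hFK, hKcard, hFcard]
    have hF2blocks : ∀ B ∈ K - F, B.card = 3 ∧ B ⊆ univ := by
      intro B hB
      exact ⟨(hKmem B).1 (Multiset.mem_of_le tsub_le_self hB), Finset.subset_univ B⟩
    have hbal2 : ThreeBalancedOn univ (K - F) := by
      intro T₁ hT₁ T₂ hT₂
      rw [Finset.mem_powersetCard_univ] at hT₁
      have h1 : (K - F).count T₁ ≤ 1 := by
        rw [Multiset.count_sub]
        have := hKcount T₁
        rw [if_pos hT₁] at this
        omega
      omega
    have hlam2g : ∀ p : Finset (Fin v), p.card = 2 →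
        (lamF (K - F) p : ℤ) = (v : ℤ) - 2 - lamF F p := by
      intro p hp
      rw [lamF_sub hFK, hlamK p hp]
      have := hlamFle p hp
      omega
    have hrange2 : l ≤ v - 3 → PairRangeOn univ (K - F) (v - 2 - l) := by
      intro hlv3 p hp
      have hp2 : p.card = 2 := by rwa [Finset.mem_powersetCard_univ] at hp
      have h1 := hlam2g p hp2
      have h2 := hrange p hp
      constructor <;> omega
    have hD2 : l ≤ v - 3 → ∀ i : ℤ, Dlev univ (K - F) (v - 2 - l) i = Dlev univ F l (-i) := by
      intro hlv3 i
      unfold Dlev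
      refine Finset.filter_congr ?_
      intro p hp
      rw [Finset.mem_powersetCard_univ] at hp
      have h1 := hlam2g p hp
      have h2 := hlamFle p hp
      omega
    have hble' : 6 * (b : ℤ) ≤ 6 * (v.choose 3 : ℤ) - 6 := by
      have : b + 1 ≤ v.choose 3 := hlt
      push_cast
      omega
    have hlle : (l : ℤ) ≤ (v : ℤ) - 2 :=
      l_le_v_sub_two hv4 hassoc.1 hassoc.2.1 hK6' hlt
    rcases hcond with ⟨hc1, hshape⟩ | ⟨hc2, hshape⟩
    · obtain ⟨hv3, l'', hl''pos, hcong, hbdiv⟩ := hc1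
      -- identify l with l''
      have hMZ : ((l'' * v * (v - 1) : ℕ) : ℤ) = (l'' : ℤ) * (v : ℤ) * ((v : ℤ) - 1) := by
        push_cast [hcast1]; ring
      have hdiv : l'' * v * (v - 1) ≤ 6 * b + 5 ∧ 6 * b ≤ l'' * v * (v - 1) + 5 := by
        obtain ⟨M, hM⟩ : ∃ M, M = l'' * v * (v - 1) := ⟨_, rfl⟩
        rw [← hM] at hbdiv ⊢
        rcases hbdiv with h1 | h1 <;> omega
      have hdivZ : (l'' : ℤ) * (v : ℤ) * ((v : ℤ) - 1) ≤ 6 * (b : ℤ) + 5 ∧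
          6 * (b : ℤ) ≤ (l'' : ℤ) * (v : ℤ) * ((v : ℤ) - 1) + 5 := by
        rw [← hMZ]
        exact_mod_cast hdiv
      have hv5 : (5 : ℤ) ≤ (v : ℤ) := by
        have : 5 ≤ v := by omega
        exact_mod_cast this
      have hleq : l = l'' :=
        assoc_l_unique hv4 hassoc.1 hassoc.2.1 hassoc.2.2
          (by linarith [hdivZ.1]) (by linarith [hdivZ.2])
      subst hleq
      have hl3 : l % 3 = 1 ∨ l % 3 = 2 := by
        rcases hcong with ⟨_, h3⟩ | ⟨_, h6⟩ <;> omega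
      have hlv3 : l ≤ v - 3 := by omega
      have hl2Z : ((v - 2 - l : ℕ) : ℤ) = (v : ℤ) - 2 - l := by omega
      have hD2a := hD2 hlv3 1
      have hD2b : Dlev univ (K - F) (v - 2 - l) (-1) = Dlev univ F l 1 := by
        rw [hD2 hlv3 (-1)]; norm_num
      refine ⟨K - F, ⟨hXcard, hF2card, hF2blocks⟩, hbal2, v - 2 - l, -e, by omega,
        ⟨?_, by linarith [hassoc.2.2], by linarith [hassoc.2.1]⟩, hrange2 hlv3,
        Or.inl ⟨⟨hv3, v - 2 - l, by omega, ?_, ?_⟩, ?_⟩⟩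
      · rw [hb2Z, hl2Z]
        linear_combination hK6' - hassoc.1
      · rcases hcong with ⟨h6, h3⟩ | ⟨h6, h6'⟩
        · left; exact ⟨h6, by omega⟩
        · right; exact ⟨h6, by omega⟩
      · have hMM : l * v * (v - 1) + (v - 2 - l) * v * (v - 1) = 6 * v.choose 3 := by
          have h1 : l + (v - 2 - l) = v - 2 := by omega
          calc l * v * (v - 1) + (v - 2 - l) * v * (v - 1)
              = (l + (v - 2 - l)) * (v * (v - 1)) := by ring
          _ = (v - 2) * (v * (v - 1)) := by rw [h1]
          _ = 6 * v.choose 3 := by rw [hK6]; ring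
        obtain ⟨M, hM⟩ : ∃ M, M = l * v * (v - 1) := ⟨_, rfl⟩
        obtain ⟨M2, hM2⟩ : ∃ M2, M2 = (v - 2 - l) * v * (v - 1) := ⟨_, rfl⟩
        rw [← hM, ← hM2] at hMM
        rw [← hM2]
        rw [← hM] at hbdiv
        rcases hbdiv with h1 | h1 <;> omega
      · have hsh := hshape
        unfold C1ShapeOn at hsh ⊢
        rw [hD2a, hD2b]
        rcases hsh with ⟨he, ht, h1, h2⟩ | ⟨he, ht, h1, h2⟩ | ⟨he, ht, h1, h2⟩ | ⟨he, ht, h1, h2⟩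
        · exact Or.inr (Or.inl ⟨by omega, by rwa [Finset.union_comm] at ht, h2, h1⟩)
        · exact Or.inl ⟨by omega, by rwa [Finset.union_comm] at ht, h2, h1⟩
        · exact Or.inr (Or.inr (Or.inr ⟨by omega, by rwa [Finset.union_comm] at ht, h2, h1⟩))
        · exact Or.inr (Or.inr (Or.inl ⟨by omega, by rwa [Finset.union_comm] at ht, h2, h1⟩))
    · obtain ⟨hv2, l'', hl''pos, hl''odd, hlow, hhigh⟩ := hc2
      have hleq : l = l'' :=
        assoc_l_unique hv4 hassoc.1 hassoc.2.1 hassoc.2.2 (le_of_lt hlow) (le_of_lt hhigh)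
      subst hleq
      have hlv3 : l ≤ v - 3 := by omega
      have hl2Z : ((v - 2 - l : ℕ) : ℤ) = (v : ℤ) - 2 - l := by omega
      have hMMZ : ((v - 2 - l : ℕ) : ℤ) * v * ((v : ℤ) - 1)
          = 6 * (v.choose 3 : ℤ) - (l : ℤ) * v * ((v : ℤ) - 1) := by
        rw [hl2Z]
        linear_combination -hK6'
      have hD2a := hD2 hlv3 1
      have hD2b : Dlev univ (K - F) (v - 2 - l) (-1) = Dlev univ F l 1 := by
        rw [hD2 hlv3 (-1)]; norm_num
      refine ⟨K - F, ⟨hXcard, hF2card, hF2blocks⟩, hbal2, v - 2 - l, -e, by omega,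
        ⟨?_, by linarith [hassoc.2.2], by linarith [hassoc.2.1]⟩, hrange2 hlv3,
        Or.inr ⟨⟨hv2, v - 2 - l, by omega, by omega, ?_, ?_⟩, ?_⟩⟩
      · rw [hb2Z, hl2Z]
        linear_combination hK6' - hassoc.1
      · rw [hMMZ, hb2Z]; linarith
      · rw [hMMZ, hb2Z]; linarith
      · have hsh := hshape
        unfold C2ShapeOn at hsh ⊢
        rw [hD2a, hD2b]
        rcases hsh with ⟨hm4, hpm, hcA, hcB⟩ | ⟨hm4, c, a₂, a₃, a₄, star, hc, ha₂, ha₃, ha₄,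
            hn1, hn2, hn3, hn4, hn5, hn6, hstar, hsub, hmatch, hor⟩
        · left
          refine ⟨by omega, by rwa [Finset.union_comm] at hpm, by omega, by omega⟩
        · right
          refine ⟨by omega, c, a₂, a₃, a₄, star, hc, ha₂, ha₃, ha₄,
            hn1, hn2, hn3, hn4, hn5, hn6, hstar, by rwa [Finset.union_comm] at hsub,
            by rwa [Finset.union_comm] at hmatch, ?_⟩
          rcases hor with ⟨i1, i2, i3, i4⟩ | ⟨i1, i2, i3, i4⟩
          · exact Or.inr ⟨i2, i1, by omega, by omega⟩
          · exact Or.inl ⟨i2, i1, by omega, by omega⟩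


end DataPlacement
end

section
/- Suppose (V,𝓕) is an NWBTS(v;b) with b < binom(v,3), and suppose 𝓕′ is the union of q pairwise disjoint simple S_p(2,3,v)s on V. If 𝓕 and 𝓕′ share no block, then (V, 𝓕 ∪ 𝓕′) is an NWBTS(v;c) with c = b + pq·v(v−1)/6. -/
/-!
Adding an S_μ(2,3,v) to a triple system raises every pair count by exactly μ, so the defect
graphs of `F + G` at level `λ + μ` are those of `F` at level `λ`, and the associated pair
`(λ, ε)` becomes `(λ + μ, ε)`. Double counting gives `6|G| = μ v (v - 1)` and `μ (v - 1)` even;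
hence `3 ∣ μ` when `v ≡ 2 (mod 3)` and `2 ∣ μ` when `v` is even, which is exactly what keeps the
congruence conditions on `λ` in (C1) and (C2). Since `b < C(v,3)` some triple is missed by `F`,
so 3-balance forces `F` to be simple; then `F + G` is simple, hence 3-balanced.
-/

namespace DataPlacement

open Finset

variable {α : Type*} [DecidableEq α]

lemma lamF_eq_countP (F : Multiset (Finset α)) (T : Finset α) :
    lamF F T = F.countP (T ⊆ ·) :=
  (Multiset.countP_eq_card_filter _ _).symm

lemma lamF_sum {ι : Type*} (s : Finset ι) (D : ι → Multiset (Finset α)) (T : Finset α) :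
    lamF (∑ i ∈ s, D i) T = ∑ i ∈ s, lamF (D i) T := by
  simp only [lamF_eq_countP, ← Multiset.coe_countPAddMonoidHom, map_sum]

lemma sum_lamF (M : Multiset (Finset α)) (S : Finset (Finset α)) :
    ∑ P ∈ S, lamF M P = (M.map fun A => #(S.filter (· ⊆ A))).sum := by
  induction M using Multiset.induction_on with
  | empty => simp [lamF]
  | cons A M ih =>
    simp only [lamF_eq_countP, Multiset.countP_cons, sum_add_distrib, card_filter,
      Multiset.map_cons, Multiset.sum_cons] at ih ⊢
    rw [ih, add_comm]

lemma filter_subset_powersetCard {X A : Finset α} (hA : A ⊆ X) (n : ℕ) :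
    (X.powersetCard n).filter (· ⊆ A) = A.powersetCard n := by
  ext P
  simp only [mem_filter, mem_powersetCard]
  exact ⟨fun ⟨⟨_, h⟩, hPA⟩ => ⟨hPA, h⟩, fun ⟨hPA, h⟩ => ⟨⟨hPA.trans hA, h⟩, hPA⟩⟩

lemma card_filter_mem_powersetCard_two {S : Finset α} {x : α} (hx : x ∈ S) :
    #((S.powersetCard 2).filter (x ∈ ·)) = #S - 1 := by
  have hnot : (S.powersetCard 2).filter (x ∉ ·) = (S.erase x).powersetCard 2 := by
    ext P
    simp only [mem_filter, mem_powersetCard, subset_erase]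
    tauto
  have hsplit := card_filter_add_card_filter_not (s := S.powersetCard 2) (x ∈ ·)
  obtain ⟨m, hm⟩ : ∃ m, #S = m + 1 := ⟨#S - 1, by have := card_pos.2 ⟨x, hx⟩; omega⟩
  have hchoose : (m + 1).choose 2 = m.choose 2 + m := by
    rw [Nat.choose_succ_succ', Nat.choose_one_right, add_comm]
  rw [hnot, card_powersetCard, card_powersetCard, card_erase_of_mem hx, hm, Nat.add_sub_cancel,
    hchoose] at hsplit
  omega

namespace IsSDesignOn

variable {X : Finset α} {μ : ℕ} {B : Multiset (Finset α)}

lemma sum {ι : Type*} (s : Finset ι) {D : ι → Multiset (Finset α)}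
    (hD : ∀ i ∈ s, IsSDesignOn X μ (D i)) : IsSDesignOn X (#s * μ) (∑ i ∈ s, D i) := by
  refine ⟨fun A hA => ?_, fun P hP => ?_⟩
  · obtain ⟨i, hi, hA⟩ := Multiset.mem_sum.1 hA
    exact (hD i hi).1 A hA
  · rw [lamF_sum, sum_congr rfl fun i hi => (hD i hi).2 P hP, sum_const, smul_eq_mul]

lemma six_mul_card (h : IsSDesignOn X μ B) :
    6 * Multiset.card B = μ * (#X * (#X - 1)) := by
  have hblocks : ∑ P ∈ X.powersetCard 2, lamF B P = 3 * Multiset.card B := by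
    rw [sum_lamF, Multiset.map_congr rfl fun A hA => by
      rw [filter_subset_powersetCard (h.1 A hA).2, card_powersetCard, (h.1 A hA).1]]
    simp [mul_comm]
  have hpairs : ∑ P ∈ X.powersetCard 2, lamF B P = (#X).choose 2 * μ := by
    rw [sum_congr rfl h.2, sum_const, card_powersetCard, smul_eq_mul]
  have h2 : 2 * (#X).choose 2 = #X * (#X - 1) := by
    rw [Nat.choose_two_right, Nat.mul_div_cancel' (Nat.even_mul_pred_self _).two_dvd]
  calc 6 * Multiset.card B = 2 * (#X).choose 2 * μ := by rw [mul_assoc, ← hpairs, hblocks]; ring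
    _ = μ * (#X * (#X - 1)) := by rw [h2, mul_comm]

/-- Counting the pairs through `x`: each block through `x` contains two of them. -/
lemma even_mul_card_sub_one (h : IsSDesignOn X μ B) {x : α} (hx : x ∈ X) :
    Even (μ * (#X - 1)) := by
  have hthrough : ∑ P ∈ (X.powersetCard 2).filter (x ∈ ·), lamF B P = (#X - 1) * μ := by
    rw [sum_congr rfl fun P hP => h.2 P (mem_filter.1 hP).1, sum_const,
      card_filter_mem_powersetCard_two hx, smul_eq_mul]
  have hblocks : ∑ P ∈ (X.powersetCard 2).filter (x ∈ ·), lamF B P =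
      2 * (B.map fun A => if x ∈ A then 1 else 0).sum := by
    rw [sum_lamF, ← Multiset.sum_map_mul_left]
    refine congrArg Multiset.sum (Multiset.map_congr rfl fun A hA => ?_)
    rw [filter_comm, filter_subset_powersetCard (h.1 A hA).2]
    split_ifs with hxA
    · rw [card_filter_mem_powersetCard_two hxA, (h.1 A hA).1]; rfl
    · exact card_eq_zero.2 (filter_eq_empty_iff.2 fun P hP hxP =>
        hxA ((mem_powersetCard.1 hP).1 hxP))
  rw [mul_comm, ← hthrough, hblocks]
  exact even_two_mul _

lemma two_dvd (h : IsSDesignOn X μ B) (hX : X.Nonempty) (heven : #X % 2 = 0) : 2 ∣ μ := by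
  obtain ⟨x, hx⟩ := hX
  have hpos := card_pos.2 ⟨x, hx⟩
  rcases Nat.even_mul.1 (h.even_mul_card_sub_one hx) with hμ | hodd
  · exact hμ.two_dvd
  · exact absurd (Nat.even_iff.1 hodd) (by omega)

lemma three_dvd (h : IsSDesignOn X μ B) (hX : #X % 3 = 2) : 3 ∣ μ := by
  have h3 : 3 ∣ μ * (#X * (#X - 1)) := ⟨2 * Multiset.card B, by rw [← h.six_mul_card]; ring⟩
  rcases (Nat.prime_three.dvd_mul).1 h3 with hμ | hX3
  · exact hμ
  · rcases (Nat.prime_three.dvd_mul).1 hX3 with h | h <;> omega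

end IsSDesignOn

lemma _root_.Multiset.nodup_finsetSum {β ι : Type*} {s : Finset ι} {D : ι → Multiset β}
    (hD : ∀ i ∈ s, (D i).Nodup) (hdisj : ∀ i ∈ s, ∀ j ∈ s, i ≠ j → Disjoint (D i) (D j)) :
    (∑ i ∈ s, D i).Nodup :=
  Multiset.nodup_bind.2 ⟨hD, Multiset.Nodup.pairwise hdisj s.nodup⟩

lemma IsTSOn.add {β : Type*} {X : Finset β} {v b : ℕ} {F G : Multiset (Finset β)}
    (hF : IsTSOn X v b F) (hG : ∀ B ∈ G, B.card = 3 ∧ B ⊆ X) :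
    IsTSOn X v (b + Multiset.card G) (F + G) := by
  refine ⟨hF.1, by rw [Multiset.card_add, hF.2.1], fun B hB => ?_⟩
  rcases Multiset.mem_add.1 hB with hB | hB
  exacts [hF.2.2 B hB, hG B hB]

variable {X : Finset α} {v b l μ : ℕ} {e : ℤ} {F G : Multiset (Finset α)}

lemma ThreeBalancedOn.of_nodup (h : F.Nodup) : ThreeBalancedOn X F := fun T₁ _ _ _ =>
  (Multiset.nodup_iff_count_le_one.1 h T₁).trans (Nat.le_add_left _ _)

lemma ThreeBalancedOn.nodup (h3 : ThreeBalancedOn X F) (hF : IsTSOn X v b F)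
    (hb : b < v.choose 3) : F.Nodup := by
  obtain ⟨hX, hcard, hblocks⟩ := hF
  have hmem : ∀ T ∈ F, T ∈ X.powersetCard 3 := fun T hT =>
    mem_powersetCard.2 ⟨(hblocks T hT).2, (hblocks T hT).1⟩
  obtain ⟨T₀, hT₀, hT₀F⟩ : ∃ T₀ ∈ X.powersetCard 3, T₀ ∉ F := by
    by_contra! hall
    have : X.powersetCard 3 ⊆ F.toFinset := fun T hT => Multiset.mem_toFinset.2 (hall T hT)
    have := (card_le_card this).trans (Multiset.toFinset_card_le F)
    rw [card_powersetCard, hX, hcard] at this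
    omega
  refine Multiset.nodup_iff_count_le_one.2 fun T => ?_
  by_cases hT : T ∈ F
  · simpa [Multiset.count_eq_zero.2 hT₀F] using h3 T (hmem T hT) T₀ hT₀
  · rw [Multiset.count_eq_zero.2 hT]
    exact zero_le_one

lemma Dlev_add (hG : ∀ P ∈ X.powersetCard 2, lamF G P = μ) (i : ℤ) :
    Dlev X (F + G) (l + μ) i = Dlev X F l i := by
  ext P
  simp only [Dlev, mem_filter, and_congr_right_iff]
  intro hP
  rw [lamF_add, hG P hP]
  omega

lemma PairRangeOn.add (hG : ∀ P ∈ X.powersetCard 2, lamF G P = μ) (h : PairRangeOn X F l) :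
    PairRangeOn X (F + G) (l + μ) := by
  intro P hP
  rw [lamF_add, hG P hP]
  have := h P hP
  omega

lemma AssocPair.add {k : ℕ} (h : AssocPair v b l e) (hk : 6 * k = μ * (v * (v - 1))) :
    AssocPair v (b + k) (l + μ) e := by
  have hv : 1 ≤ v := by have := h.2; omega
  refine ⟨?_, h.2⟩
  have hkZ : (6 * k : ℤ) = μ * (v * (v - 1)) := by exact_mod_cast hk
  push_cast
  linear_combination h.1 + hkZ

lemma CondC1.add {k : ℕ} (h : CondC1 v b) (h3 : 3 ∣ μ) (h2 : v % 2 = 0 → 2 ∣ μ)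
    (hk : 6 * k = μ * (v * (v - 1))) : CondC1 v (b + k) := by
  obtain ⟨hv3, l, hl, hcong, hb⟩ := h
  have hexpand : (l + μ) * v * (v - 1) = l * v * (v - 1) + 6 * k := by rw [hk]; ring
  refine ⟨hv3, l + μ, by omega, ?_, ?_⟩
  · rcases hcong with ⟨hv5, hl3⟩ | ⟨hv2, hl6⟩
    · exact Or.inl ⟨hv5, by omega⟩
    · have := h2 (by omega)
      exact Or.inr ⟨hv2, by omega⟩
  · rw [hexpand]
    omega

lemma CondC2.add {k : ℕ} (h : CondC2 v b) (h2 : 2 ∣ μ) (hk : 6 * k = μ * (v * (v - 1))) :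
    CondC2 v (b + k) := by
  obtain ⟨hv2, l, hl, hlodd, hlo, hhi⟩ := h
  have hv : 1 ≤ v := by nlinarith
  have hkZ : (6 * k : ℤ) = μ * (v * (v - 1)) := by exact_mod_cast hk
  refine ⟨hv2, l + μ, by omega, by omega, ?_, ?_⟩ <;> push_cast <;> linarith

theorem IsNWBTSOn.add_sDesign (hF : IsNWBTSOn X v b F) (hb : b < v.choose 3)
    (hG : IsSDesignOn X μ G) (hGnodup : G.Nodup) (hdisj : Disjoint F G) :
    IsNWBTSOn X v (b + Multiset.card G) (F + G) := by
  obtain ⟨hTS, h3, l, e, hl, hassoc, hrange, hshape⟩ := hF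
  have hX : #X = v := hTS.1
  have hk : 6 * Multiset.card G = μ * (v * (v - 1)) := hX ▸ hG.six_mul_card
  have hne : X.Nonempty := card_pos.1 (by have := hassoc.2; omega)
  have h2 : v % 2 = 0 → 2 ∣ μ := fun hv => hG.two_dvd hne (hX ▸ hv)
  refine ⟨hTS.add hG.1, .of_nodup (Multiset.nodup_add.2 ⟨h3.nodup hTS hb, hGnodup, hdisj⟩),
    l + μ, e, by omega, hassoc.add hk, hrange.add hG.2, ?_⟩
  simp only [C1ShapeOn, C2ShapeOn, Dlev_add hG.2]
  rcases hshape with ⟨hC1, hshape⟩ | ⟨hC2, hshape⟩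
  · exact .inl ⟨hC1.add (hG.three_dvd (hX ▸ hC1.1)) h2 hk, hshape⟩
  · exact .inr ⟨hC2.add (h2 hC2.1) hk, hshape⟩

/-- adding disjoint simple S_p(2,3,v)s to an NWBTS. -/
theorem stmt_4 (v b p q : ℕ)
    (F F' : Multiset (Finset (Fin v)))
    (hF : IsNWBTSOn Finset.univ v b F) (hb : b < v.choose 3)
    (D : Fin q → Multiset (Finset (Fin v)))
    (hD : ∀ i, (D i).Nodup ∧ IsSDesignOn Finset.univ p (D i))
    (hDdisj : ∀ i j, i ≠ j → Disjoint (D i) (D j))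
    (hF' : F' = ∑ i, D i)
    (hdisj : Disjoint F F') :
    IsNWBTSOn Finset.univ v (b + p * q * v * (v - 1) / 6) (F + F') := by
  have hdesign : IsSDesignOn univ (q * p) F' := by
    simpa [hF'] using IsSDesignOn.sum univ fun i _ => (hD i).2
  have hnodup : F'.Nodup :=
    hF' ▸ Multiset.nodup_finsetSum (fun i _ => (hD i).1) fun i _ j _ => hDdisj i j
  have hcard : p * q * v * (v - 1) / 6 = Multiset.card F' := by
    have hk := hdesign.six_mul_card
    rw [card_univ, Fintype.card_fin] at hk
    rw [show p * q * v * (v - 1) = 6 * Multiset.card F' by rw [hk]; ring]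
    omega
  rw [hcard]
  exact hF.add_sDesign hb hdesign hnodup hdisj

end DataPlacement
end

section
/- Let u and v be integers with v ≡ u (mod 6) and u ≡ 2 or 5 (mod 6), let c < binom(u,3), and suppose (u,c) satisfies condition (C1) with associated pair (λ,ε). Suppose (U,𝓕) is an NWBTS(u;c) and (V,𝓕′) is a simple GDD_λ(2,3,v) of type 1^{v−u}u^1 with long group U ⊆ V. Then (V, 𝓕 ∪ 𝓕′) is an NWBTS(v;b), where b is the integer with 3b = λ·binom(v,2) + ε. -/
namespace DataPlacement

open Finset

variable {α : Type*} [DecidableEq α]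

lemma lamF_eq_zero {F : Multiset (Finset α)} {T : Finset α}
    (h : ∀ B ∈ F, ¬ T ⊆ B) : lamF F T = 0 := by
  simp [lamF, Multiset.filter_eq_nil.mpr h]

lemma sum_lamF_s5 (X : Finset α) :
    ∀ (F : Multiset (Finset α)), (∀ B ∈ F, B.card = 3 ∧ B ⊆ X) →
    ∑ p ∈ X.powersetCard 2, lamF F p = 3 * Multiset.card F := by
  intro F
  induction F using Multiset.induction_on with
  | empty => intro _; simp [lamF]
  | cons a s ih =>
    intro hF
    have ha := hF a (Multiset.mem_cons_self a s)
    have hs : ∀ B ∈ s, B.card = 3 ∧ B ⊆ X := fun B hB => hF B (Multiset.mem_cons_of_mem hB)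
    have hstep : ∀ p : Finset α, lamF (a ::ₘ s) p = (if p ⊆ a then 1 else 0) + lamF s p := by
      intro p
      simp only [lamF, Multiset.filter_cons]
      split <;> simp [Nat.add_comm]
    calc ∑ p ∈ X.powersetCard 2, lamF (a ::ₘ s) p
        = ∑ p ∈ X.powersetCard 2, ((if p ⊆ a then 1 else 0) + lamF s p) :=
          Finset.sum_congr rfl fun p _ => hstep p
      _ = ((X.powersetCard 2).filter (fun p => p ⊆ a)).card
            + ∑ p ∈ X.powersetCard 2, lamF s p := by
          rw [Finset.sum_add_distrib, Finset.card_filter]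
      _ = 3 + 3 * Multiset.card s := by
          congr 1
          · have hfe : (X.powersetCard 2).filter (fun p => p ⊆ a) = a.powersetCard 2 := by
              ext p
              simp only [mem_filter, mem_powersetCard]
              constructor
              · rintro ⟨⟨_, h2⟩, h3⟩; exact ⟨h3, h2⟩
              · rintro ⟨h1, h2⟩; exact ⟨⟨h1.trans ha.2, h2⟩, h1⟩
            rw [hfe, card_powersetCard, ha.1]
            rfl
          · exact ih hs
      _ = 3 * Multiset.card (a ::ₘ s) := by simp [Multiset.card_cons]; ring

lemma two_choose_cast (n : ℕ) : 2 * ((n.choose 2 : ℕ) : ℤ) = (n : ℤ) * ((n : ℤ) - 1) := by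
  induction n with
  | zero => simp
  | succ m ih =>
    rw [Nat.choose_succ_succ, Nat.choose_one_right]
    push_cast
    push_cast at ih
    linear_combination ih

lemma assoc_close {u c : ℕ} (hu : 3 ≤ u) {l1 l2 : ℕ} {d1 d2 : ℤ}
    (h1 : 6 * (c : ℤ) = (l1 : ℤ) * u * ((u : ℤ) - 1) + d1)
    (h2 : 6 * (c : ℤ) = (l2 : ℤ) * u * ((u : ℤ) - 1) + d2)
    (hd1 : -(u : ℤ) < d1) (hd1' : d1 < u) (hd2 : -(u : ℤ) < d2) (hd2' : d2 < u) :
    l1 = l2 := by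
  have hu3 : (3 : ℤ) ≤ (u : ℤ) := by exact_mod_cast hu
  have key : ((l1 : ℤ) - l2) * ((u : ℤ) * ((u : ℤ) - 1)) = d2 - d1 := by
    linear_combination h2 - h1
  have hprod : 2 * (u : ℤ) ≤ (u : ℤ) * ((u : ℤ) - 1) := by nlinarith
  rcases lt_trichotomy l1 l2 with h | h | h
  · exfalso
    have hle : ((l1 : ℤ) - l2) ≤ -1 := by
      have : (l1 : ℤ) < l2 := by exact_mod_cast h
      linarith
    have := mul_le_mul_of_nonneg_right hle (by nlinarith : (0:ℤ) ≤ (u : ℤ) * ((u : ℤ) - 1))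
    linarith [key]
  · exact h
  · exfalso
    have hle : (1 : ℤ) ≤ (l1 : ℤ) - l2 := by
      have : (l2 : ℤ) < l1 := by exact_mod_cast h
      linarith
    have := mul_le_mul_of_nonneg_right hle (by nlinarith : (0:ℤ) ≤ (u : ℤ) * ((u : ℤ) - 1))
    linarith [key]

lemma cast_luu (l u : ℕ) (h1 : 1 ≤ u) :
    ((l * u * (u - 1) : ℕ) : ℤ) = (l : ℤ) * u * ((u : ℤ) - 1) := by
  push_cast [Nat.cast_sub h1]
  ring

lemma uu_mod (u : ℕ) (hu : u % 6 = 2 ∨ u % 6 = 5) : ∃ a, u * (u - 1) = 6 * a + 2 := by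
  rcases hu with h | h
  · obtain ⟨k, hk⟩ : ∃ k, u = 6 * k + 2 := ⟨u / 6, by omega⟩
    refine ⟨6 * k * k + 3 * k, ?_⟩
    subst hk
    have h1 : 6 * k + 2 - 1 = 6 * k + 1 := by omega
    rw [h1]; ring
  · obtain ⟨k, hk⟩ : ∃ k, u = 6 * k + 5 := ⟨u / 6, by omega⟩
    refine ⟨6 * k * k + 9 * k + 3, ?_⟩
    subst hk
    have h1 : 6 * k + 5 - 1 = 6 * k + 4 := by omega
    rw [h1]; ring

lemma condC1_assoc {u c : ℕ} (hu : u % 6 = 2 ∨ u % 6 = 5) (hC1 : CondC1 u c) :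
    ∃ (l0 : ℕ) (e0 : ℤ), 0 < l0 ∧
      ((u % 6 = 5 ∧ (l0 % 3 = 1 ∨ l0 % 3 = 2)) ∨ (u % 6 = 2 ∧ (l0 % 6 = 2 ∨ l0 % 6 = 4))) ∧
      6 * (c : ℤ) = (l0 : ℤ) * u * ((u : ℤ) - 1) + 2 * e0 ∧
      (e0 = 1 ∨ e0 = -1 ∨ e0 = 2 ∨ e0 = -2) := by
  obtain ⟨hv3, l0, hl0, hpar, hbf⟩ := hC1
  obtain ⟨a, ha⟩ := uu_mod u hu
  have hl3 : l0 % 3 = 1 ∨ l0 % 3 = 2 := by rcases hpar with ⟨_, h⟩ | ⟨_, h⟩ <;> omega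
  have hNt : l0 * u * (u - 1) = 6 * (l0 * a) + 2 * l0 := by rw [mul_assoc, ha]; ring
  have hcast : ((l0 * u * (u - 1) : ℕ) : ℤ) = (l0 : ℤ) * u * ((u : ℤ) - 1) :=
    cast_luu l0 u (by omega)
  have hkey : 6 * c + 2 = l0 * u * (u - 1) ∨ 6 * c + 4 = l0 * u * (u - 1) ∨
      6 * c = l0 * u * (u - 1) + 4 ∨ 6 * c = l0 * u * (u - 1) + 2 := by omega
  refine ⟨l0, ?_⟩
  rcases hkey with h | h | h | h
  · exact ⟨-1, hl0, hpar, by rw [← hcast]; omega, by tauto⟩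
  · exact ⟨-2, hl0, hpar, by rw [← hcast]; omega, by tauto⟩
  · exact ⟨2, hl0, hpar, by rw [← hcast]; omega, by tauto⟩
  · exact ⟨1, hl0, hpar, by rw [← hcast]; omega, by tauto⟩

/-- filling the long group of a simple GDD with an NWBTS. -/
theorem stmt_5 (u v c l : ℕ) (e : ℤ)
    (hmod : v % 6 = u % 6) (humod : u % 6 = 2 ∨ u % 6 = 5)
    (hc : c < u.choose 3) (hC1 : CondC1 u c) (hassoc : AssocPair u c l e)
    (U : Finset (Fin v)) (F F' : Multiset (Finset (Fin v)))
    (hF : IsNWBTSOn U u c F)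
    (hF'simple : F'.Nodup)
    (hGDD : IsGDD1u (Finset.univ : Finset (Fin v)) l u U F')
    (b : ℕ) (hb : 3 * (b : ℤ) = (l : ℤ) * (v.choose 2 : ℤ) + e) :
    IsNWBTSOn Finset.univ v b (F + F') := by
  obtain ⟨⟨hUcard, hFcard, hFblocks⟩, hF3bal, l', e', hl'pos, hassoc', hpr', hshape⟩ := hF
  obtain ⟨hUuniv, hUcard', hGblocks, hGpairs⟩ := hGDD
  obtain ⟨ha1, ha2, ha3⟩ := hassoc
  have hu3 : 3 ≤ u := by
    by_contra h
    have h0 : u.choose 3 = 0 := Nat.choose_eq_zero_of_lt (by omega)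
    omega
  have hu5 : 5 ≤ u := by omega
  have huv : u ≤ v := by
    have h := Finset.card_le_card hUuniv
    rwa [hUcard, Finset.card_fin] at h
  have huvZ : (u : ℤ) ≤ (v : ℤ) := by exact_mod_cast huv
  -- uniqueness of the associated pair
  obtain ⟨ha1', ha2', ha3'⟩ := hassoc'
  have hll : l' = l := assoc_close hu3 ha1' ha1 ha2' ha3' ha2 ha3
  subst l'
  have hee : e' = e := by
    have h2 : 2 * e' = 2 * e := by linarith [ha1, ha1']
    omega
  subst e'
  -- analysis of condition (C1) for (u, c)
  obtain ⟨l0, e0, hl0pos, hpar0, heq0, hev0⟩ := condC1_assoc humod hC1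
  have hb1 : -(u : ℤ) < 2 * e0 := by
    have : (5 : ℤ) ≤ (u : ℤ) := by exact_mod_cast hu5
    rcases hev0 with h | h | h | h <;> rw [h] <;> omega
  have hb2 : 2 * e0 < (u : ℤ) := by
    have : (5 : ℤ) ≤ (u : ℤ) := by exact_mod_cast hu5
    rcases hev0 with h | h | h | h <;> rw [h] <;> omega
  have hl0 : l0 = l := assoc_close hu3 heq0 ha1 hb1 hb2 ha2 ha3
  subst l0
  have he0 : e0 = e := by
    have h2 : 2 * e0 = 2 * e := by linarith [heq0, ha1]
    omega
  subst e0
  -- kill the (C2) branch of the NWBTS hypothesis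
  rcases hshape with ⟨_, hshape⟩ | ⟨hC2u, _⟩
  swap
  · exfalso
    obtain ⟨hueven, l2, hl2pos, hl2odd, hlb, hub⟩ := hC2u
    have hl2 : l2 = l :=
      assoc_close hu3
        (show 6 * (c : ℤ) = (l2 : ℤ) * u * ((u : ℤ) - 1) + (6 * (c : ℤ) - (l2 : ℤ) * u * ((u : ℤ) - 1)) by ring)
        ha1 (by linarith) (by linarith) ha2 ha3
    rcases hpar0 with ⟨h5, _⟩ | ⟨h2, hleven⟩
    · omega
    · omega
  -- basic zero-count facts
  have hz1 : ∀ p : Finset (Fin v), p.card = 2 → p ⊆ U → lamF F' p = 0 := by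
    intro p hp2 hpU
    apply lamF_eq_zero
    intro A hA hpA
    have hsub : p ⊆ A ∩ U := Finset.subset_inter hpA hpU
    have h1 := Finset.card_le_card hsub
    have h2 := (hGblocks A hA).2.2
    omega
  have hz2 : ∀ p : Finset (Fin v), ¬ p ⊆ U → lamF F p = 0 := by
    intro p hpU
    apply lamF_eq_zero
    intro B hB hpB
    exact hpU (hpB.trans (hFblocks B hB).2)
  -- block count
  have hsumF' : ∑ p ∈ (univ : Finset (Fin v)).powersetCard 2, lamF F' p
      = 3 * Multiset.card F' :=
    sum_lamF_s5 _ F' (fun A hA => ⟨(hGblocks A hA).1, Finset.subset_univ A⟩)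
  have hsub2 : U.powersetCard 2 ⊆ (univ : Finset (Fin v)).powersetCard 2 :=
    Finset.powersetCard_mono (Finset.subset_univ U)
  have hsplit : ∑ p ∈ (univ : Finset (Fin v)).powersetCard 2, lamF F' p
      = l * (v.choose 2 - u.choose 2) := by
    rw [← Finset.sum_sdiff hsub2]
    have hA : ∑ p ∈ U.powersetCard 2, lamF F' p = 0 :=
      Finset.sum_eq_zero (fun p hp => by
        obtain ⟨h1, h2⟩ := Finset.mem_powersetCard.mp hp
        exact hz1 p h2 h1)
    have hB : ∑ p ∈ (univ : Finset (Fin v)).powersetCard 2 \ U.powersetCard 2, lamF F' p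
        = l * (v.choose 2 - u.choose 2) := by
      have hval : ∀ p ∈ (univ : Finset (Fin v)).powersetCard 2 \ U.powersetCard 2,
          lamF F' p = l := by
        intro p hp
        obtain ⟨hp1, hp2⟩ := Finset.mem_sdiff.mp hp
        obtain ⟨hx, hcard⟩ := Finset.mem_powersetCard.mp hp1
        exact hGpairs p hp1 (fun hpU => hp2 (Finset.mem_powersetCard.mpr ⟨hpU, hcard⟩))
      rw [Finset.sum_congr rfl hval, Finset.sum_const, smul_eq_mul,
        Finset.card_sdiff_of_subset hsub2, card_powersetCard, card_powersetCard,
        Finset.card_fin, hUcard]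
      ring
    rw [hA, hB]
    omega
  have hcF' : 3 * Multiset.card F' = l * (v.choose 2 - u.choose 2) := by
    rw [← hsumF', hsplit]
  have hchle : u.choose 2 ≤ v.choose 2 := Nat.choose_le_choose 2 huv
  have hc2u := two_choose_cast u
  have hc2v := two_choose_cast v
  have hcardb : Multiset.card (F + F') = b := by
    have hcc : (Multiset.card F : ℤ) = (c : ℤ) := by exact_mod_cast hFcard
    zify [hchle] at hcF'
    have e1 : 2 * (3 * (c : ℤ)) = 2 * ((l : ℤ) * (u.choose 2 : ℤ) + e) := by
      linear_combination ha1 - (l : ℤ) * hc2u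
    have e4 : 2 * (3 * (b : ℤ)) = 2 * ((l : ℤ) * (v.choose 2 : ℤ) + e) := by
      linear_combination 2 * hb
    have h5 : (Multiset.card F : ℤ) + (Multiset.card F' : ℤ) = (b : ℤ) := by
      linarith [hcF', e1, e4, hcc]
    rw [Multiset.card_add]
    omega
  -- blocks
  have hblocks : ∀ B ∈ F + F', B.card = 3 ∧ B ⊆ (univ : Finset (Fin v)) := by
    intro B hB
    rcases Multiset.mem_add.mp hB with h | h
    · exact ⟨(hFblocks B h).1, Finset.subset_univ B⟩
    · exact ⟨(hGblocks B h).1, Finset.subset_univ B⟩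
  -- three-balance
  have hFsub3 : F.toFinset ⊆ U.powersetCard 3 := by
    intro B hB
    have hBF := Multiset.mem_toFinset.mp hB
    exact Finset.mem_powersetCard.mpr ⟨(hFblocks B hBF).2, (hFblocks B hBF).1⟩
  have hex : ∃ T0 ∈ U.powersetCard 3, Multiset.count T0 F = 0 := by
    by_contra hcon
    push_neg at hcon
    have hge : ∀ T ∈ U.powersetCard 3, 1 ≤ Multiset.count T F :=
      fun T hT => Nat.one_le_iff_ne_zero.mpr (hcon T hT)
    have hsum : ∑ T ∈ U.powersetCard 3, Multiset.count T F = c := by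
      rw [← hFcard, ← Multiset.toFinset_sum_count_eq]
      refine (Finset.sum_subset hFsub3 ?_).symm
      intro T _ hT
      exact Multiset.count_eq_zero.mpr (fun hm => hT (Multiset.mem_toFinset.mpr hm))
    have hcard : (U.powersetCard 3).card ≤ ∑ T ∈ U.powersetCard 3, Multiset.count T F := by
      rw [Finset.card_eq_sum_ones]
      exact Finset.sum_le_sum hge
    rw [hsum, card_powersetCard, hUcard] at hcard
    omega
  obtain ⟨T0, hT0m, hT00⟩ := hex
  have hFle1 : ∀ T : Finset (Fin v), Multiset.count T F ≤ 1 := by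
    intro T
    rcases Nat.eq_zero_or_pos (Multiset.count T F) with h | h
    · omega
    · have hTF : T ∈ F := Multiset.count_pos.mp h
      have hTm : T ∈ U.powersetCard 3 :=
        Finset.mem_powersetCard.mpr ⟨(hFblocks T hTF).2, (hFblocks T hTF).1⟩
      have := hF3bal T hTm T0 hT0m
      omega
  have hF'le1 : ∀ T : Finset (Fin v), Multiset.count T F' ≤ 1 :=
    Multiset.nodup_iff_count_le_one.mp hF'simple
  have hle1 : ∀ T ∈ (univ : Finset (Fin v)).powersetCard 3,
      Multiset.count T (F + F') ≤ 1 := by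
    intro T hT
    obtain ⟨_, hT3⟩ := Finset.mem_powersetCard.mp hT
    rw [Multiset.count_add]
    by_cases hTU : T ⊆ U
    · have h0 : Multiset.count T F' = 0 := Multiset.count_eq_zero.mpr (fun hm => by
        have h1 := (hGblocks T hm).2.2
        rw [Finset.inter_eq_left.mpr hTU] at h1
        omega)
      have := hFle1 T
      omega
    · have h0 : Multiset.count T F = 0 :=
        Multiset.count_eq_zero.mpr (fun hm => hTU (hFblocks T hm).2)
      have := hF'le1 T
      omega
  have h3bal : ThreeBalancedOn (univ : Finset (Fin v)) (F + F') := by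
    intro T1 h1 T2 h2
    have := hle1 T1 h1
    omega
  -- defect-set transfer
  have hD : ∀ i : ℤ, i = 1 ∨ i = -1 →
      Dlev (univ : Finset (Fin v)) (F + F') l i = Dlev U F l i := by
    intro i hi
    ext p
    simp only [Dlev, Finset.mem_filter, Finset.mem_powersetCard]
    constructor
    · rintro ⟨⟨hpX, hp2⟩, hcnt⟩
      by_cases hpU : p ⊆ U
      · refine ⟨⟨hpU, hp2⟩, ?_⟩
        rw [lamF_add, hz1 p hp2 hpU] at hcnt
        simpa using hcnt
      · exfalso
        rw [lamF_add, hz2 p hpU, hGpairs p (Finset.mem_powersetCard.mpr ⟨hpX, hp2⟩) hpU]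
          at hcnt
        push_cast at hcnt
        rcases hi with h | h <;> omega
    · rintro ⟨⟨hpU, hp2⟩, hcnt⟩
      refine ⟨⟨Finset.subset_univ p, hp2⟩, ?_⟩
      rw [lamF_add, hz1 p hp2 hpU]
      simpa using hcnt
  -- pair range
  have hPR : PairRangeOn (univ : Finset (Fin v)) (F + F') l := by
    intro p hp
    obtain ⟨hpX, hp2⟩ := Finset.mem_powersetCard.mp hp
    rw [lamF_add]
    by_cases hpU : p ⊆ U
    · rw [hz1 p hp2 hpU]
      have := hpr' p (Finset.mem_powersetCard.mpr ⟨hpU, hp2⟩)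
      simpa using this
    · rw [hz2 p hpU, hGpairs p hp hpU]
      push_cast
      omega
  -- associated pair for (v, b)
  have hAP : AssocPair v b l e := by
    refine ⟨?_, ?_, ?_⟩
    · linear_combination 2 * hb + (l : ℤ) * hc2v
    · omega
    · omega
  -- condition (C1) for (v, b)
  have hC1vb : CondC1 v b := by
    refine ⟨by omega, l, hl0pos, ?_, ?_⟩
    · rcases hpar0 with ⟨h5, hp⟩ | ⟨h2, hp⟩
      · exact Or.inl ⟨by omega, hp⟩
      · exact Or.inr ⟨by omega, hp⟩
    · have hcastv : ((l * v * (v - 1) : ℕ) : ℤ) = (l : ℤ) * v * ((v : ℤ) - 1) :=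
        cast_luu l v (by omega)
      have h6b : 6 * (b : ℤ) = ((l * v * (v - 1) : ℕ) : ℤ) + 2 * e := by
        rw [hcastv]
        linear_combination 2 * hb + (l : ℤ) * hc2v
      rcases hev0 with h | h | h | h <;> subst h <;> omega
  -- shape transfer
  have hshape' : C1ShapeOn (univ : Finset (Fin v)) (F + F') l e := by
    unfold C1ShapeOn
    rw [hD 1 (Or.inl rfl), hD (-1) (Or.inr rfl)]
    exact hshape
  exact ⟨⟨Finset.card_fin v, hcardb, hblocks⟩, h3bal, l, e, hl0pos, hAP, hPR,
    Or.inl ⟨hC1vb, hshape'⟩⟩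


end DataPlacement
end
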